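/- arXiv:1905.05283 — 2 statements merged into one kernel-verified Lean document; each statement's English description precedes it below -/
import Mathlib

section
/- In type A_n, the monomial map p ↦ m(p) = ∏_{r ∈ C⁺_p} Y_{r, y_r} ∏_{r ∈ C⁻_p} Y_{r, y_r}^{-1} is injective on P_{i,k}: distinct paths in P_{i,k} have distinct associated monomials. -/
/-- The defining condition of the path set `P_{i,k}` in type `Aₙ`. -/
def IsPathA (n i : ℕ) (k : ℤ) (y : Fin (n + 2) → ℤ) : Prop :=
  y 0 = (i : ℤ) + k ∧
  y (Fin.last (n + 1)) = (n : ℤ) + 1 - (i : ℤ) + k ∧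
  ∀ j : Fin (n + 1), y j.succ - y j.castSucc = 1 ∨ y j.succ - y j.castSucc = -1

/-- The set `C⁺_p` of upper corners `(r, y_r)` of a path. -/
def UpperCorners (n : ℕ) (y : Fin (n + 2) → ℤ) : Set (ℕ × ℤ) :=
  {c | ∃ r : Fin (n + 2), 1 ≤ (r : ℕ) ∧ (r : ℕ) ≤ n ∧ c = ((r : ℕ), y r) ∧
        y (r - 1) = y r + 1 ∧ y (r + 1) = y r + 1}

/-- The set `C⁻_p` of lower corners `(r, y_r)` of a path. -/
def LowerCorners (n : ℕ) (y : Fin (n + 2) → ℤ) : Set (ℕ × ℤ) :=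
  {c | ∃ r : Fin (n + 2), 1 ≤ (r : ℕ) ∧ (r : ℕ) ≤ n ∧ c = ((r : ℕ), y r) ∧
        y (r - 1) = y r - 1 ∧ y (r + 1) = y r - 1}

namespace Stmt17

def nY (n : ℕ) (y : Fin (n + 2) → ℤ) (m : ℕ) : ℤ := y ⟨min m (n+1), by omega⟩

lemma nY_eq {n : ℕ} (y : Fin (n+2) → ℤ) {m : ℕ} (hm : m ≤ n+1) :
    nY n y m = y ⟨m, by omega⟩ := by
  unfold nY; congr 1; exact Fin.ext (by simpa using min_eq_left hm)

lemma sub_one_val {n : ℕ} (r : Fin (n+2)) (h1 : 1 ≤ (r:ℕ)) :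
    ((r-1 : Fin (n+2)) : ℕ) = (r:ℕ) - 1 := by
  have hr : r ≠ 0 := by intro h; rw [h] at h1; simp at h1
  rw [Fin.coe_sub_one, if_neg hr]

lemma add_one_val {n : ℕ} (r : Fin (n+2)) (h2 : (r:ℕ) ≤ n) :
    ((r+1 : Fin (n+2)) : ℕ) = (r:ℕ) + 1 := by
  have hr : r ≠ Fin.last (n+1) := by
    intro h; rw [h] at h2; simp [Fin.last] at h2
  rw [Fin.val_add_one, if_neg hr]

lemma step {n i : ℕ} {k : ℤ} {y : Fin (n+2) → ℤ} (hy : IsPathA n i k y) {j : ℕ} (hj : j ≤ n) :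
    nY n y (j+1) - nY n y j = 1 ∨ nY n y (j+1) - nY n y j = -1 := by
  rw [nY_eq y (by omega), nY_eq y (by omega)]
  exact hy.2.2 ⟨j, by omega⟩

lemma mem_upper_iff {n : ℕ} (y : Fin (n+2) → ℤ) (c : ℕ × ℤ) :
    c ∈ UpperCorners n y ↔ ∃ r : ℕ, 1 ≤ r ∧ r ≤ n ∧ c = (r, nY n y r) ∧
      nY n y (r-1) = nY n y r + 1 ∧ nY n y (r+1) = nY n y r + 1 := by
  have key : ∀ (r : Fin (n+2)), 1 ≤ (r:ℕ) → (r:ℕ) ≤ n →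
      (nY n y ((r:ℕ)) = y r ∧ nY n y ((r:ℕ)-1) = y (r-1) ∧ nY n y ((r:ℕ)+1) = y (r+1)) := by
    intro r h1 h2
    refine ⟨?_, ?_, ?_⟩
    · rw [nY_eq y (by omega)]
    · rw [nY_eq y (by omega)]; exact congrArg y (Fin.ext (by rw [sub_one_val r h1]))
    · rw [nY_eq y (by omega)]; exact congrArg y (Fin.ext (by rw [add_one_val r h2]))
  constructor
  · rintro ⟨r, h1, h2, rfl, ha, hb⟩
    obtain ⟨e0, e1, e2⟩ := key r h1 h2
    exact ⟨(r:ℕ), h1, h2, by rw [e0], by rw [e0, e1, ha], by rw [e0, e2, hb]⟩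
  · rintro ⟨r, h1, h2, rfl, ha, hb⟩
    refine ⟨⟨r, by omega⟩, h1, h2, ?_, ?_, ?_⟩
    · exact congrArg (fun t => ((r:ℕ), t)) (nY_eq y (by omega))
    · obtain ⟨e0, e1, e2⟩ := key ⟨r, by omega⟩ h1 h2
      rw [← e0, ← e1]; exact ha
    · obtain ⟨e0, e1, e2⟩ := key ⟨r, by omega⟩ h1 h2
      rw [← e0, ← e2]; exact hb

lemma mem_lower_iff {n : ℕ} (y : Fin (n+2) → ℤ) (c : ℕ × ℤ) :
    c ∈ LowerCorners n y ↔ ∃ r : ℕ, 1 ≤ r ∧ r ≤ n ∧ c = (r, nY n y r) ∧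
      nY n y (r-1) = nY n y r - 1 ∧ nY n y (r+1) = nY n y r - 1 := by
  have key : ∀ (r : Fin (n+2)), 1 ≤ (r:ℕ) → (r:ℕ) ≤ n →
      (nY n y ((r:ℕ)) = y r ∧ nY n y ((r:ℕ)-1) = y (r-1) ∧ nY n y ((r:ℕ)+1) = y (r+1)) := by
    intro r h1 h2
    refine ⟨?_, ?_, ?_⟩
    · rw [nY_eq y (by omega)]
    · rw [nY_eq y (by omega)]; exact congrArg y (Fin.ext (by rw [sub_one_val r h1]))
    · rw [nY_eq y (by omega)]; exact congrArg y (Fin.ext (by rw [add_one_val r h2]))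
  constructor
  · rintro ⟨r, h1, h2, rfl, ha, hb⟩
    obtain ⟨e0, e1, e2⟩ := key r h1 h2
    exact ⟨(r:ℕ), h1, h2, by rw [e0], by rw [e0, e1, ha], by rw [e0, e2, hb]⟩
  · rintro ⟨r, h1, h2, rfl, ha, hb⟩
    refine ⟨⟨r, by omega⟩, h1, h2, ?_, ?_, ?_⟩
    · exact congrArg (fun t => ((r:ℕ), t)) (nY_eq y (by omega))
    · obtain ⟨e0, e1, e2⟩ := key ⟨r, by omega⟩ h1 h2
      rw [← e0, ← e1]; exact ha
    · obtain ⟨e0, e1, e2⟩ := key ⟨r, by omega⟩ h1 h2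
      rw [← e0, ← e2]; exact hb

lemma disjointUL {n : ℕ} (y : Fin (n+2) → ℤ) (c : ℕ × ℤ)
    (h1 : c ∈ UpperCorners n y) (h2 : c ∈ LowerCorners n y) : False := by
  rw [mem_upper_iff] at h1
  rw [mem_lower_iff] at h2
  obtain ⟨r, _, _, rfl, ha, _⟩ := h1
  obtain ⟨r', _, _, hc, hb, _⟩ := h2
  have hrr : r = r' := by exact_mod_cast congrArg Prod.fst hc
  subst hrr
  omega

end Stmt17

/-- In type `Aₙ`, the monomial map
`p ↦ m(p) = ∏_{(r,y_r) ∈ C⁺_p} Y_{r,y_r} · ∏_{(r,y_r) ∈ C⁻_p} Y_{r,y_r}^{-1}`,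
regarded as the exponent function on the free abelian group on the symbols `Y_{j,ℓ}`,
is injective on `P_{i,k}`: distinct paths have distinct associated monomials. -/
theorem stmt_17 (n i : ℕ) (k : ℤ) (hi1 : 1 ≤ i) (hi2 : i ≤ n) :
    Function.Injective (fun p : {y : Fin (n + 2) → ℤ // IsPathA n i k y} =>
      (fun c : ℕ × ℤ =>
        Set.indicator (UpperCorners n p.1) (fun _ => (1 : ℤ)) c -
        Set.indicator (LowerCorners n p.1) (fun _ => (1 : ℤ)) c)) := by
  rintro ⟨y, hy⟩ ⟨z, hz⟩ hpq
  simp only [Subtype.mk_eq_mk]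
  have hfun : ∀ c : ℕ × ℤ,
      Set.indicator (UpperCorners n y) (fun _ => (1 : ℤ)) c -
        Set.indicator (LowerCorners n y) (fun _ => (1 : ℤ)) c =
      Set.indicator (UpperCorners n z) (fun _ => (1 : ℤ)) c -
        Set.indicator (LowerCorners n z) (fun _ => (1 : ℤ)) c := fun c => congrFun hpq c
  -- set equalities
  have key : ∀ c : ℕ × ℤ, (c ∈ UpperCorners n y ↔ c ∈ UpperCorners n z) ∧
      (c ∈ LowerCorners n y ↔ c ∈ LowerCorners n z) := by
    intro c
    have h := hfun c
    by_cases h1 : c ∈ UpperCorners n y <;> by_cases h2 : c ∈ LowerCorners n y <;>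
      by_cases h3 : c ∈ UpperCorners n z <;> by_cases h4 : c ∈ LowerCorners n z <;>
      first
        | exact absurd h2 (fun h2 => Stmt17.disjointUL y c h1 h2)
        | exact absurd h4 (fun h4 => Stmt17.disjointUL z c h3 h4)
        | (simp only [Set.indicator_of_mem, Set.indicator_of_notMem, h1, h2, h3, h4,
            if_pos, if_neg, Set.indicator_apply] at h; simp_all)
  set Y := Stmt17.nY n y with hYdef
  set Z := Stmt17.nY n z with hZdef
  have hSy : ∀ j, j ≤ n → Y (j+1) - Y j = 1 ∨ Y (j+1) - Y j = -1 := fun j hj => Stmt17.step hy hj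
  have hSz : ∀ j, j ≤ n → Z (j+1) - Z j = 1 ∨ Z (j+1) - Z j = -1 := fun j hj => Stmt17.step hz hj
  have hY0 : Y 0 = (i : ℤ) + k := by rw [hYdef, Stmt17.nY_eq y (by omega)]; exact hy.1
  have hZ0 : Z 0 = (i : ℤ) + k := by rw [hZdef, Stmt17.nY_eq z (by omega)]; exact hz.1
  have hYl : Y (n+1) = (n : ℤ) + 1 - (i : ℤ) + k := by
    rw [hYdef, Stmt17.nY_eq y (by omega)]; exact hy.2.1
  -- Lemma C: at each interior position, both paths behave identically
  have hC : ∀ r, 1 ≤ r → r ≤ n →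
      ((Y (r+1) - Y r = Z (r+1) - Z r ∧ Y r - Y (r-1) = Z r - Z (r-1)) ∨
       (Y (r+1) - Y r = Y r - Y (r-1) ∧ Z (r+1) - Z r = Z r - Z (r-1))) := by
    intro r h1 h2
    have e : r - 1 + 1 = r := by omega
    have sy1 := hSy (r-1) (by omega); rw [e] at sy1
    have sy2 := hSy r h2
    have sz1 := hSz (r-1) (by omega); rw [e] at sz1
    have sz2 := hSz r h2
    by_cases hc : Y (r+1) - Y r = Y r - Y (r-1)
    · right
      refine ⟨hc, ?_⟩
      by_contra hnc
      rcases sz2 with hs | hs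
      · -- Z upper corner at r
        have hzc : (r, Z r) ∈ UpperCorners n z := by
          rw [Stmt17.mem_upper_iff, ← hZdef]
          exact ⟨r, h1, h2, rfl, by omega, by omega⟩
        have hyc := ((key (r, Z r)).1).mpr hzc
        rw [Stmt17.mem_upper_iff, ← hYdef] at hyc
        obtain ⟨r', hr1, hr2, hcc, ha, hb⟩ := hyc
        have : r' = r ∧ Z r = Y r' := by
          constructor
          · exact (congrArg Prod.fst hcc).symm
          · exact congrArg Prod.snd hcc
        obtain ⟨rfl, hv⟩ := this
        omega
      · -- Z lower corner at r
        have hzc : (r, Z r) ∈ LowerCorners n z := by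
          rw [Stmt17.mem_lower_iff, ← hZdef]
          exact ⟨r, h1, h2, rfl, by omega, by omega⟩
        have hyc := ((key (r, Z r)).2).mpr hzc
        rw [Stmt17.mem_lower_iff, ← hYdef] at hyc
        obtain ⟨r', hr1, hr2, hcc, ha, hb⟩ := hyc
        have : r' = r ∧ Z r = Y r' := by
          constructor
          · exact (congrArg Prod.fst hcc).symm
          · exact congrArg Prod.snd hcc
        obtain ⟨rfl, hv⟩ := this
        omega
    · left
      rcases sy2 with hs | hs
      · -- Y upper corner at r
        have hyc : (r, Y r) ∈ UpperCorners n y := by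
          rw [Stmt17.mem_upper_iff, ← hYdef]
          exact ⟨r, h1, h2, rfl, by omega, by omega⟩
        have hzc := ((key (r, Y r)).1).mp hyc
        rw [Stmt17.mem_upper_iff, ← hZdef] at hzc
        obtain ⟨r', hr1, hr2, hcc, ha, hb⟩ := hzc
        have : r' = r ∧ Y r = Z r' := by
          constructor
          · exact (congrArg Prod.fst hcc).symm
          · exact congrArg Prod.snd hcc
        obtain ⟨rfl, hv⟩ := this
        constructor <;> omega
      · -- Y lower corner at r
        have hyc : (r, Y r) ∈ LowerCorners n y := by
          rw [Stmt17.mem_lower_iff, ← hYdef]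
          exact ⟨r, h1, h2, rfl, by omega, by omega⟩
        have hzc := ((key (r, Y r)).2).mp hyc
        rw [Stmt17.mem_lower_iff, ← hZdef] at hzc
        obtain ⟨r', hr1, hr2, hcc, ha, hb⟩ := hzc
        have : r' = r ∧ Y r = Z r' := by
          constructor
          · exact (congrArg Prod.fst hcc).symm
          · exact congrArg Prod.snd hcc
        obtain ⟨rfl, hv⟩ := this
        constructor <;> omega
  -- existence of a corner of y
  have hex : ∃ r, 1 ≤ r ∧ r ≤ n ∧ Y (r+1) - Y r ≠ Y r - Y (r-1) := by
    by_contra hne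
    push_neg at hne
    have hconst : ∀ j, j ≤ n → Y (j+1) - Y j = Y 1 - Y 0 := by
      intro j
      induction j with
      | zero => intro _; rfl
      | succ m ih =>
        intro hm
        have := hne (m+1) (by omega) (by omega)
        have e : m + 1 - 1 = m := by omega
        rw [e] at this
        rw [this]; exact ih (by omega)
    have hval : ∀ j, j ≤ n+1 → Y j = Y 0 + j * (Y 1 - Y 0) := by
      intro j
      induction j with
      | zero => intro _; simp
      | succ m ih =>
        intro hm
        have h1 := hconst m (by omega)
        have h2 := ih (by omega)
        push_cast
        push_cast at h2
        linarith
    have hv := hval (n+1) (by omega)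
    have hs := hSy 0 (by omega)
    rw [hYl, hY0] at hv
    rcases hs with hs | hs <;> rw [hY0] at hs <;> rw [hs] at hv <;> push_cast at hv <;> omega
  obtain ⟨r0, hr01, hr02, hr0⟩ := hex
  have hanchor : Y (r0+1) - Y r0 = Z (r0+1) - Z r0 ∧ Y r0 - Y (r0-1) = Z r0 - Z (r0-1) := by
    rcases hC r0 hr01 hr02 with h | h
    · exact h
    · exact absurd h.1 hr0
  -- forward propagation
  have fwd : ∀ d, r0 + d ≤ n → Y (r0+d+1) - Y (r0+d) = Z (r0+d+1) - Z (r0+d) := by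
    intro d
    induction d with
    | zero => intro _; exact hanchor.1
    | succ m ih =>
      intro hm
      have ihm := ih (by omega)
      rcases hC (r0+m+1) (by omega) (by omega) with h | h
      · exact h.1
      · have e : r0 + m + 1 - 1 = r0 + m := by omega
        rw [e] at h
        rw [show r0 + (m+1) = r0 + m + 1 by omega]
        omega
  -- backward propagation
  have bwd : ∀ d, d ≤ r0 - 1 → Y (r0-1-d+1) - Y (r0-1-d) = Z (r0-1-d+1) - Z (r0-1-d) := by
    intro d
    induction d with
    | zero =>
      intro _
      have e1 : r0 - 1 - 0 + 1 = r0 := by omega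
      have e2 : r0 - 1 - 0 = r0 - 1 := by omega
      rw [e1, e2]; exact hanchor.2
    | succ m ih =>
      intro hm
      have ihm := ih (by omega)
      have hr : 1 ≤ r0 - 1 - m ∧ r0 - 1 - m ≤ n := by omega
      rcases hC (r0-1-m) hr.1 hr.2 with h | h
      · have e : r0 - 1 - m - 1 = r0 - 1 - (m+1) := by omega
        rw [e] at h
        have e2 : r0 - 1 - (m+1) + 1 = r0 - 1 - m := by omega
        rw [e2]
        exact h.2
      · have e : r0 - 1 - m - 1 = r0 - 1 - (m+1) := by omega
        rw [e] at h
        have e2 : r0 - 1 - (m+1) + 1 = r0 - 1 - m := by omega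
        rw [e2]
        omega
  have hstep : ∀ m, m ≤ n → Y (m+1) - Y m = Z (m+1) - Z m := by
    intro m hm
    by_cases hcase : r0 ≤ m
    · have := fwd (m - r0) (by omega)
      rw [show r0 + (m - r0) = m by omega] at this
      exact this
    · have := bwd (r0 - 1 - m) (by omega)
      rw [show r0 - 1 - (r0 - 1 - m) = m by omega] at this
      exact this
  have hall : ∀ j, j ≤ n+1 → Y j = Z j := by
    intro j
    induction j with
    | zero => intro _; rw [hY0, hZ0]
    | succ m ih =>
      intro hm
      have h1 := hstep m (by omega)
      have h2 := ih (by omega)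
      omega
  funext a
  have ha : (a : ℕ) ≤ n + 1 := by omega
  have e1 : Y (a : ℕ) = y a := by
    rw [hYdef, Stmt17.nY_eq y ha]
  have e2 : Z (a : ℕ) = z a := by
    rw [hZdef, Stmt17.nY_eq z ha]
  rw [← e1, ← e2]
  exact hall (a : ℕ) ha
end

section
/- In type A_n, a path p ∈ P_{i,k} is uniquely determined by its set C⁻_p of lower corners together with the data (i,k); explicitly, p is the pointwise maximum over all paths in P_{i,k} having the prescribed lower corners C⁻_p. -/
lemma aux_step {n : ℕ} {y : Fin (n + 2) → ℤ}
    (h : ∀ j : Fin (n + 1), y j.succ - y j.castSucc = 1 ∨ y j.succ - y j.castSucc = -1)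
    (a b : Fin (n + 2)) (hab : (b : ℕ) = (a : ℕ) + 1) :
    y b - y a = 1 ∨ y b - y a = -1 := by
  have ha : (a : ℕ) < n + 1 := by have := b.isLt; omega
  have h1 := h ⟨(a : ℕ), ha⟩
  have e1 : (⟨(a : ℕ), ha⟩ : Fin (n + 1)).castSucc = a := Fin.ext rfl
  have e2 : (⟨(a : ℕ), ha⟩ : Fin (n + 1)).succ = b := Fin.ext (by simp [hab])
  rwa [e1, e2] at h1

set_option maxHeartbeats 1000000 in
lemma aux_le {n i : ℕ} {k : ℤ} {y z : Fin (n + 2) → ℤ}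
    (hy : IsPathA n i k y) (hz : IsPathA n i k z)
    (hC : LowerCorners n y = LowerCorners n z) : ∀ j, y j ≤ z j := by
  by_contra h
  push_neg at h
  obtain ⟨j0, hj0⟩ := h
  set T : Finset (Fin (n + 2)) := Finset.univ.filter (fun j => z j < y j) with hT
  have hTne : T.Nonempty := ⟨j0, by simp [hT, hj0]⟩
  obtain ⟨r, hrT, hmax⟩ := T.exists_max_image y hTne
  have hr : z r < y r := by simpa [hT] using hrT
  have h0 : y 0 = z 0 := by rw [hy.1, hz.1]
  have hlast : y (Fin.last (n + 1)) = z (Fin.last (n + 1)) := by rw [hy.2.1, hz.2.1]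
  have hr0 : (r : ℕ) ≠ 0 := by
    intro hv
    have : r = 0 := Fin.ext (by simpa using hv)
    rw [this] at hr; omega
  have hrn : (r : ℕ) ≤ n := by
    by_contra hv
    have hlt := r.isLt
    have : r = Fin.last (n + 1) := Fin.ext (by simp [Fin.last]; omega)
    rw [this] at hr; omega
  have hrlt := r.isLt
  -- neighbors
  set a : Fin (n + 2) := ⟨(r : ℕ) - 1, by omega⟩ with ha
  set b : Fin (n + 2) := ⟨(r : ℕ) + 1, by omega⟩ with hb
  have hra : r - 1 = a := by
    apply Fin.ext
    rw [Fin.coe_sub_one, if_neg]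
    intro hv
    exact hr0 (by rw [hv]; simp)
  have hrb : r + 1 = b := by
    apply Fin.ext
    rw [Fin.val_add_one, if_neg]
    intro hv
    have : (r : ℕ) = n + 1 := by rw [hv]; simp [Fin.last]
    omega
  -- steps around r
  have hav : (r : ℕ) = (a : ℕ) + 1 := by simp [ha]; omega
  have hbv : (b : ℕ) = (r : ℕ) + 1 := by simp [hb]
  have hstepy1 := aux_step hy.2.2 a r hav
  have hstepz1 := aux_step hz.2.2 a r hav
  have hstepy2 := aux_step hy.2.2 r b hbv
  have hstepz2 := aux_step hz.2.2 r b hbv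
  -- a and b are not in T with larger y value, so y a = y r - 1, y b = y r - 1
  have hya : y a = y r - 1 := by
    rcases hstepy1 with h1 | h1
    · omega
    · -- y a = y r + 1
      exfalso
      have hza : z a ≤ z r + 1 := by rcases hstepz1 with h2 | h2 <;> omega
      have haT : a ∈ T := by simp [hT]; omega
      have := hmax a haT
      omega
  have hyb : y b = y r - 1 := by
    rcases hstepy2 with h1 | h1
    · -- y b = y r + 1
      exfalso
      have hzb : z b ≤ z r + 1 := by rcases hstepz2 with h2 | h2 <;> omega
      have hbT : b ∈ T := by simp [hT]; omega
      have := hmax b hbT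
      omega
    · omega
  -- (r, y r) is a lower corner of y
  have hmem : ((r : ℕ), y r) ∈ LowerCorners n y := by
    refine ⟨r, by omega, hrn, rfl, ?_, ?_⟩
    · rw [hra]; exact hya
    · rw [hrb]; exact hyb
  rw [hC] at hmem
  obtain ⟨s, hs1, hs2, hseq, hsm, hsp⟩ := hmem
  have hsv : (s : ℕ) = (r : ℕ) := by
    have := congrArg Prod.fst hseq
    simpa using this.symm
  have hsr : s = r := Fin.ext hsv
  have : z s = y r := by
    have := congrArg Prod.snd hseq
    simpa using this.symm
  rw [hsr] at this
  omega

/-- In type `Aₙ`, a path `p ∈ P_{i,k}` is uniquely determined by its set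
`C⁻_p` of lower corners together with the data `(i,k)`: the map `p ↦ C⁻_p` is
injective on `P_{i,k}`. -/
theorem stmt_18 (n i : ℕ) (k : ℤ) (hi1 : 1 ≤ i) (hi2 : i ≤ n) :
    Function.Injective (fun p : {y : Fin (n + 2) → ℤ // IsPathA n i k y} =>
      LowerCorners n p.1) := by
  intro p q h
  simp only at h
  apply Subtype.ext
  funext j
  exact le_antisymm (aux_le p.2 q.2 h j) (aux_le q.2 p.2 h.symm j)
end
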